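/- (ℱ_K perturbation.) For any K, K′ ∈ ℝ^{k×d}, the linear operators ℱ_K and ℱ_{K′} on symmetric d×d matrices satisfy ‖ℱ_K − ℱ_{K′}‖ ≤ 2‖A−BK‖·‖B‖·‖K−K′‖ + ‖B‖²·‖K−K′‖², where the operator norm is induced by the spectral norm on symmetric matrices. -/

import Mathlib

open Matrix

noncomputable section

/-- Spectral radius of a real square matrix: the supremum of the absolute values of its
complex eigenvalues. -/
def specRad {d : ℕ} (M : Matrix (Fin d) (Fin d) ℝ) : ℝ :=
  ⨆ μ : spectrum ℂ (M.map (algebraMap ℝ ℂ)), ‖(μ : ℂ)‖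

/-- Minimum singular value of a real matrix. -/
def sigmaMin {m n : ℕ} (M : Matrix (Fin m) (Fin n) ℝ) : ℝ :=
  Real.sqrt (⨅ i, (Matrix.isHermitian_conjTranspose_mul_self M).eigenvalues i)

/-- Spectral norm (maximum singular value) of a real matrix. -/
def specNorm {m n : ℕ} (M : Matrix (Fin m) (Fin n) ℝ) : ℝ :=
  Real.sqrt (⨆ i, (Matrix.isHermitian_conjTranspose_mul_self M).eigenvalues i)

/-- Frobenius norm of a real matrix. -/
def frobNorm {m n : ℕ} (M : Matrix (Fin m) (Fin n) ℝ) : ℝ :=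
  Real.sqrt (∑ i, ∑ j, (M i j) ^ 2)

/-- For a stabilizing gain `K`, the unique positive semidefinite solution `P_K` of
`P = Q + Kᵀ R K + (A - B K)ᵀ P (A - B K)`, given by its convergent series representation. -/
def Pmat {d k : ℕ} (A : Matrix (Fin d) (Fin d) ℝ) (B : Matrix (Fin d) (Fin k) ℝ)
    (Q : Matrix (Fin d) (Fin d) ℝ) (R : Matrix (Fin k) (Fin k) ℝ)
    (K : Matrix (Fin k) (Fin d) ℝ) : Matrix (Fin d) (Fin d) ℝ :=
  ∑' t : ℕ, ((A - B * K)ᵀ) ^ t * (Q + Kᵀ * R * K) * (A - B * K) ^ t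

/-- The state correlation matrix `Σ_K = ∑_{t} (A-BK)^t Σ₀ ((A-BK)ᵀ)^t`. -/
def SigmaMat {d k : ℕ} (A : Matrix (Fin d) (Fin d) ℝ) (B : Matrix (Fin d) (Fin k) ℝ)
    (Sig0 : Matrix (Fin d) (Fin d) ℝ) (K : Matrix (Fin k) (Fin d) ℝ) :
    Matrix (Fin d) (Fin d) ℝ :=
  ∑' t : ℕ, (A - B * K) ^ t * Sig0 * ((A - B * K)ᵀ) ^ t

/-- The LQR cost `C(K) = Tr(Σ₀ P_K)`. -/
def Cost {d k : ℕ} (A : Matrix (Fin d) (Fin d) ℝ) (B : Matrix (Fin d) (Fin k) ℝ)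
    (Q : Matrix (Fin d) (Fin d) ℝ) (R : Matrix (Fin k) (Fin k) ℝ)
    (Sig0 : Matrix (Fin d) (Fin d) ℝ) (K : Matrix (Fin k) (Fin d) ℝ) : ℝ :=
  (Sig0 * Pmat A B Q R K).trace

/-- `E_K = (R + Bᵀ P_K B) K - Bᵀ P_K A`. -/
def Emat {d k : ℕ} (A : Matrix (Fin d) (Fin d) ℝ) (B : Matrix (Fin d) (Fin k) ℝ)
    (Q : Matrix (Fin d) (Fin d) ℝ) (R : Matrix (Fin k) (Fin k) ℝ)
    (K : Matrix (Fin k) (Fin d) ℝ) : Matrix (Fin k) (Fin d) ℝ :=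
  (R + Bᵀ * Pmat A B Q R K * B) * K - Bᵀ * Pmat A B Q R K * A

/-- The operator `𝒯_K(X) = ∑_t (A-BK)^t X ((A-BK)ᵀ)^t` on (symmetric) matrices. -/
def TK {d k : ℕ} (A : Matrix (Fin d) (Fin d) ℝ) (B : Matrix (Fin d) (Fin k) ℝ)
    (K : Matrix (Fin k) (Fin d) ℝ) (X : Matrix (Fin d) (Fin d) ℝ) :
    Matrix (Fin d) (Fin d) ℝ :=
  ∑' t : ℕ, (A - B * K) ^ t * X * ((A - B * K)ᵀ) ^ t

/-- The operator `ℱ_K(X) = (A-BK) X (A-BK)ᵀ` on (symmetric) matrices. -/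
def FK {d k : ℕ} (A : Matrix (Fin d) (Fin d) ℝ) (B : Matrix (Fin d) (Fin k) ℝ)
    (K : Matrix (Fin k) (Fin d) ℝ) (X : Matrix (Fin d) (Fin d) ℝ) :
    Matrix (Fin d) (Fin d) ℝ :=
  (A - B * K) * X * (A - B * K)ᵀ

/-- The norm of a linear operator on symmetric matrices induced by the spectral norm. -/
def opNormSym {d : ℕ} (L : Matrix (Fin d) (Fin d) ℝ → Matrix (Fin d) (Fin d) ℝ) : ℝ :=
  sSup {r : ℝ | ∃ X : Matrix (Fin d) (Fin d) ℝ,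
    Xᵀ = X ∧ X ≠ 0 ∧ r = specNorm (L X) / specNorm X}

open scoped Matrix.Norms.L2Operator

lemma specNorm_eq_l2norm {m n : ℕ} (M : Matrix (Fin m) (Fin n) ℝ) :
    specNorm M = ‖M‖ := by
  rcases Nat.eq_zero_or_pos n with hn | hn
  · subst hn
    have hM : M = 0 := Subsingleton.elim _ _
    rw [hM, norm_zero]
    simp [specNorm, Real.iSup_of_isEmpty]
  · have : NeZero n := ⟨hn.ne'⟩
    set hH := Matrix.isHermitian_conjTranspose_mul_self M with hHdef
    obtain ⟨j, hj⟩ := Finite.exists_max hH.eigenvalues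
    have hsup : (⨆ i, hH.eigenvalues i) = hH.eigenvalues j :=
      le_antisymm (ciSup_le hj) (le_ciSup (Set.Finite.bddAbove (Set.finite_range _)) j)
    have hlam0 : 0 ≤ hH.eigenvalues j := by
      have := Matrix.eigenvalues_conjTranspose_mul_self_nonneg M j
      exact this
    set T : EuclideanSpace ℝ (Fin n) →ₗ[ℝ] EuclideanSpace ℝ (Fin n) :=
      Matrix.toEuclideanLin (Mᴴ * M) with hT
    set S : EuclideanSpace ℝ (Fin n) →ₗ[ℝ] EuclideanSpace ℝ (Fin m) :=
      Matrix.toEuclideanLin M with hS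
    have hsym : ∀ x y, inner ℝ (T x) y = (inner ℝ x (T y) : ℝ) :=
      fun x y => (Matrix.isHermitian_iff_isSymmetric.1 hH) x y
    set b := hH.eigenvectorBasis with hb
    have hTb : ∀ i, T (b i) = hH.eigenvalues i • b i := by
      intro i
      apply (WithLp.equiv 2 _).injective
      simp only [hT, Matrix.toEuclideanLin_apply, Equiv.apply_symm_apply]
      have := hH.mulVec_eigenvectorBasis i
      simp at this ⊢
      exact this
    have key : ∀ x : EuclideanSpace ℝ (Fin n), (inner ℝ x (T x) : ℝ) =
        ∑ i, hH.eigenvalues i * (b.repr x i)^2 := by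
      intro x
      have h1 : (inner ℝ x (T x) : ℝ) = inner ℝ (b.repr x) (b.repr (T x)) := by
        rw [← b.repr.inner_map_map]
      rw [h1, PiLp.inner_apply]
      refine Finset.sum_congr rfl fun i _ => ?_
      have h2 : b.repr (T x) i = hH.eigenvalues i * b.repr x i := by
        rw [b.repr_apply_apply, b.repr_apply_apply, ← hsym (b i) x, hTb i]
        simp [inner_smul_left, real_inner_comm]
      simp [h2, RCLike.inner_apply]
      ring
    have keynorm : ∀ x : EuclideanSpace ℝ (Fin n),
        ‖S x‖^2 = (inner ℝ x (T x) : ℝ) := by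
      intro x
      rw [← real_inner_self_eq_norm_sq]
      show (inner ℝ (S x) (S x) : ℝ) = inner ℝ x (T x)
      simp only [hS, hT, Matrix.toEuclideanLin_apply]
      rw [EuclideanSpace.inner_eq_star_dotProduct, EuclideanSpace.inner_eq_star_dotProduct]
      simp only [Equiv.apply_symm_apply]
      rw [Matrix.conjTranspose_eq_transpose_of_trivial]
      simp only [star_trivial, ← Matrix.mulVec_mulVec, Matrix.dotProduct_mulVec,
        Matrix.vecMul_transpose]
      rw [Matrix.mulVec_transpose]
    have hbound : ∀ x : EuclideanSpace ℝ (Fin n),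
        ‖S x‖ ≤ Real.sqrt (hH.eigenvalues j) * ‖x‖ := by
      intro x
      have hx2 : ∑ i, (b.repr x i)^2 = ‖x‖^2 := by
        rw [← b.repr.norm_map x]
        rw [EuclideanSpace.norm_eq, Real.sq_sqrt (by positivity)]
        refine Finset.sum_congr rfl fun i _ => ?_
        rw [Real.norm_eq_abs, sq_abs]
      have h3 : ‖S x‖^2 ≤ hH.eigenvalues j * ‖x‖^2 := by
        rw [keynorm x, key x, ← hx2, Finset.mul_sum]
        refine Finset.sum_le_sum fun i _ => ?_
        have := sq_nonneg (b.repr x i)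
        nlinarith [hj i]
      calc ‖S x‖ = Real.sqrt (‖S x‖^2) := (Real.sqrt_sq (norm_nonneg _)).symm
        _ ≤ Real.sqrt (hH.eigenvalues j * ‖x‖^2) := Real.sqrt_le_sqrt h3
        _ = Real.sqrt (hH.eigenvalues j) * ‖x‖ := by
            rw [Real.sqrt_mul hlam0, Real.sqrt_sq (norm_nonneg _)]
    have hupper : ‖M‖ ≤ Real.sqrt (hH.eigenvalues j) := by
      rw [Matrix.l2_opNorm_def]
      exact ContinuousLinearMap.opNorm_le_bound _ (Real.sqrt_nonneg _) fun x => hbound x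
    have hlower : Real.sqrt (hH.eigenvalues j) ≤ ‖M‖ := by
      have hnormb : ‖b j‖ = 1 := b.orthonormal.1 j
      have h1 : ‖S (b j)‖^2 = hH.eigenvalues j := by
        rw [keynorm, key]
        rw [Finset.sum_eq_single j]
        · simp [b.repr_self, hnormb]
        · intro i _ hij
          simp [b.repr_self, Pi.single_apply, hij]
        · intro h; exact absurd (Finset.mem_univ j) h
      have h2 : ‖S (b j)‖ = Real.sqrt (hH.eigenvalues j) := by
        rw [← h1, Real.sqrt_sq (norm_nonneg _)]
      rw [← h2]
      have h4 := Matrix.l2_opNorm_mulVec M (b j)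
      rw [hnormb, mul_one] at h4
      convert h4 using 2
      rfl
    rw [specNorm, hsup]
    exact le_antisymm hlower hupper


lemma specNorm_nonneg {m n : ℕ} (M : Matrix (Fin m) (Fin n) ℝ) : 0 ≤ specNorm M :=
  Real.sqrt_nonneg _

open scoped Matrix.Norms.L2Operator in
lemma specNorm_transpose {m n : ℕ} (M : Matrix (Fin m) (Fin n) ℝ) :
    specNorm Mᵀ = specNorm M := by
  rw [specNorm_eq_l2norm, specNorm_eq_l2norm, ← Matrix.conjTranspose_eq_transpose_of_trivial]
  exact Matrix.l2_opNorm_conjTranspose M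

set_option maxHeartbeats 1600000 in
open scoped Matrix.Norms.L2Operator in
/-- `ℱ_K` perturbation. -/
theorem FK_perturbation {d k : ℕ}
    (A : Matrix (Fin d) (Fin d) ℝ) (B : Matrix (Fin d) (Fin k) ℝ)
    (K K' : Matrix (Fin k) (Fin d) ℝ) :
    opNormSym (fun X => FK A B K X - FK A B K' X) ≤
      2 * specNorm (A - B * K) * specNorm B * specNorm (K - K') +
        specNorm B ^ 2 * specNorm (K - K') ^ 2 := by
  set M := A - B * K with hMdef
  set D := K - K' with hDdef
  clear_value M D
  have hB0 := specNorm_nonneg B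
  have hM0 := specNorm_nonneg M
  have hD0 := specNorm_nonneg D
  have hC : 0 ≤ 2 * specNorm M * specNorm B * specNorm D +
      specNorm B ^ 2 * specNorm D ^ 2 := by
    have h1 : 0 ≤ 2 * specNorm M * specNorm B * specNorm D := by
      have := mul_nonneg (mul_nonneg (mul_nonneg (by norm_num : (0:ℝ) ≤ 2) hM0) hB0) hD0
      exact this
    have h2 : 0 ≤ specNorm B ^ 2 * specNorm D ^ 2 :=
      mul_nonneg (sq_nonneg _) (sq_nonneg _)
    linarith
  apply Real.sSup_le _ hC
  rintro r ⟨X, hXsym, hX0, rfl⟩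
  simp only [specNorm_eq_l2norm] at hB0 hM0 hD0 ⊢
  have hXpos : 0 < ‖X‖ := norm_pos_iff.mpr hX0
  rw [div_le_iff₀ hXpos]
  have hM' : A - B * K' = M + B * D := by
    rw [hMdef, hDdef, Matrix.mul_sub]; abel
  have hid : FK A B K X - FK A B K' X =
      -((B * D) * X * Mᵀ + M * X * (Dᵀ * Bᵀ) + (B * D) * X * (Dᵀ * Bᵀ)) := by
    simp only [FK, ← hMdef, hM', Matrix.transpose_add, Matrix.transpose_mul]
    noncomm_ring
  rw [hid, norm_neg]
  have hMt : ‖Mᵀ‖ = ‖M‖ := by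
    rw [← specNorm_eq_l2norm, ← specNorm_eq_l2norm, specNorm_transpose]
  have hN : ‖B * D‖ ≤ ‖B‖ * ‖D‖ := Matrix.l2_opNorm_mul B D
  have hNt : ‖Dᵀ * Bᵀ‖ ≤ ‖B‖ * ‖D‖ := by
    calc ‖Dᵀ * Bᵀ‖ ≤ ‖Dᵀ‖ * ‖Bᵀ‖ := Matrix.l2_opNorm_mul _ _
      _ = ‖B‖ * ‖D‖ := by
          rw [← specNorm_eq_l2norm, ← specNorm_eq_l2norm, ← specNorm_eq_l2norm,
            ← specNorm_eq_l2norm, specNorm_transpose, specNorm_transpose, mul_comm]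
  have t1 : ‖(B * D) * X * Mᵀ‖ ≤ ‖B‖ * ‖D‖ * ‖X‖ * ‖M‖ := by
    calc ‖(B * D) * X * Mᵀ‖ ≤ ‖(B * D) * X‖ * ‖Mᵀ‖ := Matrix.l2_opNorm_mul _ _
      _ ≤ (‖B * D‖ * ‖X‖) * ‖Mᵀ‖ := by
          gcongr
          exact Matrix.l2_opNorm_mul _ _
      _ ≤ ‖B‖ * ‖D‖ * ‖X‖ * ‖M‖ := by
          rw [hMt]; gcongr
  have t2 : ‖M * X * (Dᵀ * Bᵀ)‖ ≤ ‖M‖ * ‖X‖ * (‖B‖ * ‖D‖) := by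
    calc ‖M * X * (Dᵀ * Bᵀ)‖ ≤ ‖M * X‖ * ‖Dᵀ * Bᵀ‖ := Matrix.l2_opNorm_mul _ _
      _ ≤ (‖M‖ * ‖X‖) * (‖B‖ * ‖D‖) := by
          refine mul_le_mul (Matrix.l2_opNorm_mul _ _) hNt (norm_nonneg _) ?_
          exact mul_nonneg (norm_nonneg _) (norm_nonneg _)
  have t3 : ‖(B * D) * X * (Dᵀ * Bᵀ)‖ ≤ ‖B‖ * ‖D‖ * ‖X‖ * (‖B‖ * ‖D‖) := by
    calc ‖(B * D) * X * (Dᵀ * Bᵀ)‖ ≤ ‖(B * D) * X‖ * ‖Dᵀ * Bᵀ‖ := Matrix.l2_opNorm_mul _ _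
      _ ≤ (‖B * D‖ * ‖X‖) * (‖B‖ * ‖D‖) := by
          refine mul_le_mul ?_ hNt (norm_nonneg _) ?_
          · exact Matrix.l2_opNorm_mul _ _
          · exact mul_nonneg (norm_nonneg _) (norm_nonneg _)
      _ ≤ ‖B‖ * ‖D‖ * ‖X‖ * (‖B‖ * ‖D‖) := by gcongr
  calc ‖(B * D) * X * Mᵀ + M * X * (Dᵀ * Bᵀ) + (B * D) * X * (Dᵀ * Bᵀ)‖
      ≤ ‖(B * D) * X * Mᵀ + M * X * (Dᵀ * Bᵀ)‖ + ‖(B * D) * X * (Dᵀ * Bᵀ)‖ :=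
        norm_add_le _ _
    _ ≤ ‖(B * D) * X * Mᵀ‖ + ‖M * X * (Dᵀ * Bᵀ)‖ + ‖(B * D) * X * (Dᵀ * Bᵀ)‖ := by
        have := norm_add_le ((B * D) * X * Mᵀ) (M * X * (Dᵀ * Bᵀ))
        linarith
    _ ≤ (‖B‖ * ‖D‖ * ‖X‖ * ‖M‖) + (‖M‖ * ‖X‖ * (‖B‖ * ‖D‖)) +
        (‖B‖ * ‖D‖ * ‖X‖ * (‖B‖ * ‖D‖)) := by linarith
    _ = (2 * ‖M‖ * ‖B‖ * ‖D‖ + ‖B‖ ^ 2 * ‖D‖ ^ 2) * ‖X‖ := by ring
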